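/- arXiv:1705.03522 — 8 statements merged into one kernel-verified Lean document; each statement's English description precedes it below -/
import Mathlib

section
/- Let g be a Lie algebra over a field K and N : g → g a linear operator. The bracket [x,y]_N := [Nx,y] + [x,Ny] − N[x,y] satisfies the Jacobi identity (and hence, being bilinear and antisymmetric, is a Lie bracket on g) if and only if the Chevalley–Eilenberg coboundary of the Nijenhuis torsion vanishes, i.e. for all x,y,z ∈ g: [x, T_N(y,z)] + [y, T_N(z,x)] + [z, T_N(x,y)] − T_N([x,y], z) − T_N([y,z], x) − T_N([z,x], y) = 0. -/
variable {K : Type*} [Field K] {g : Type*} [LieRing g] [LieAlgebra K g]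

/-- The deformed bracket `[x,y]_N := [Nx,y] + [x,Ny] - N[x,y]`. -/
def nBracket (N : g →ₗ[K] g) (x y : g) : g := ⁅N x, y⁆ + ⁅x, N y⁆ - N ⁅x, y⁆

/-- The Nijenhuis torsion `T_N(x,y) := [Nx,Ny] - N([x,y]_N)`. -/
def nTorsion (N : g →ₗ[K] g) (x y : g) : g := ⁅N x, N y⁆ - N (nBracket N x y)

lemma skew_pair (a b : g) : ⁅a, b⁆ + ⁅b, a⁆ = 0 := by
  rw [← lie_skew a b]; abel

/-- The Jacobi cyclic sum for `[,]_N` equals minus the Chevalley–Eilenberg coboundary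
of the Nijenhuis torsion. -/
lemma nBracket_jacobi_eq_neg_coboundary (N : g →ₗ[K] g) (x y z : g) :
      nBracket N x (nBracket N y z) + nBracket N y (nBracket N z x) +
        nBracket N z (nBracket N x y) =
      -(⁅x, nTorsion N y z⁆ + ⁅y, nTorsion N z x⁆ + ⁅z, nTorsion N x y⁆
        - nTorsion N ⁅x, y⁆ z - nTorsion N ⁅y, z⁆ x - nTorsion N ⁅z, x⁆ y) := by
  have sA1 : ⁅N x, N ⁅y, z⁆⁆ + ⁅N ⁅y, z⁆, N x⁆ = 0 := skew_pair _ _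
  have sA2 : ⁅N y, N ⁅z, x⁆⁆ + ⁅N ⁅z, x⁆, N y⁆ = 0 := skew_pair _ _
  have sA3 : ⁅N z, N ⁅x, y⁆⁆ + ⁅N ⁅x, y⁆, N z⁆ = 0 := skew_pair _ _
  have nsA1 : N ⁅x, N ⁅y, z⁆⁆ + N ⁅N ⁅y, z⁆, x⁆ = 0 := by
    rw [← map_add, skew_pair, map_zero]
  have nsA2 : N ⁅y, N ⁅z, x⁆⁆ + N ⁅N ⁅z, x⁆, y⁆ = 0 := by
    rw [← map_add, skew_pair, map_zero]
  have nsA3 : N ⁅z, N ⁅x, y⁆⁆ + N ⁅N ⁅x, y⁆, z⁆ = 0 := by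
    rw [← map_add, skew_pair, map_zero]
  have ntA1 : N ⁅x, ⁅N y, z⁆⁆ + N ⁅x, ⁅z, N y⁆⁆ = 0 := by
    rw [← map_add, ← lie_add, skew_pair, lie_zero, map_zero]
  have ntA2 : N ⁅y, ⁅N z, x⁆⁆ + N ⁅y, ⁅x, N z⁆⁆ = 0 := by
    rw [← map_add, ← lie_add, skew_pair, lie_zero, map_zero]
  have ntA3 : N ⁅z, ⁅N x, y⁆⁆ + N ⁅z, ⁅y, N x⁆⁆ = 0 := by
    rw [← map_add, ← lie_add, skew_pair, lie_zero, map_zero]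
  have j1 := lie_jacobi (N x) (N y) z
  have j2 := lie_jacobi (N x) y (N z)
  have j3 := lie_jacobi x (N y) (N z)
  have jN1 : N (N ⁅x, ⁅y, z⁆⁆) + N (N ⁅y, ⁅z, x⁆⁆) + N (N ⁅z, ⁅x, y⁆⁆) = 0 := by
    rw [← map_add, ← map_add, ← map_add, ← map_add, lie_jacobi, map_zero, map_zero]
  have jN2 : N (N ⁅x, ⁅z, y⁆⁆) + N (N ⁅z, ⁅y, x⁆⁆) + N (N ⁅y, ⁅x, z⁆⁆) = 0 := by
    rw [← map_add, ← map_add, ← map_add, ← map_add, lie_jacobi, map_zero, map_zero]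
  simp only [nBracket, nTorsion, map_add, map_sub, lie_add, add_lie, lie_sub, sub_lie,
    lie_lie]
  linear_combination (norm := abel) -sA1 - sA2 - sA3 + nsA1 + nsA2 + nsA3
    - ntA1 - ntA2 - ntA3 + j1 + j2 + j3 - jN1 + jN2

/-- The bracket `[,]_N` satisfies the Jacobi identity iff the Chevalley–Eilenberg
coboundary of the Nijenhuis torsion vanishes. -/
theorem nBracket_jacobi_iff_coboundary_torsion_eq_zero (N : g →ₗ[K] g) :
    (∀ x y z : g,
      nBracket N x (nBracket N y z) + nBracket N y (nBracket N z x) +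
        nBracket N z (nBracket N x y) = 0) ↔
    (∀ x y z : g,
      ⁅x, nTorsion N y z⁆ + ⁅y, nTorsion N z x⁆ + ⁅z, nTorsion N x y⁆
        - nTorsion N ⁅x, y⁆ z - nTorsion N ⁅y, z⁆ x - nTorsion N ⁅z, x⁆ y = 0) := by
  constructor
  · intro h x y z
    have k := nBracket_jacobi_eq_neg_coboundary N x y z
    rw [h x y z] at k
    exact neg_eq_zero.mp k.symm
  · intro h x y z
    rw [nBracket_jacobi_eq_neg_coboundary N x y z, h x y z, neg_zero]
end

section
/- Let g be a Lie algebra over a field K and N : g → g a linear operator such that the coboundary of the Nijenhuis torsion vanishes, i.e. [x, T_N(y,z)] + [y, T_N(z,x)] + [z, T_N(x,y)] − T_N([x,y], z) − T_N([y,z], x) − T_N([z,x], y) = 0 for all x,y,z ∈ g. Then the Lie bracket [,]_N is compatible with [,]: for all λ₁, λ₂ ∈ K, the bracket (x,y) ↦ λ₁[x,y] + λ₂[x,y]_N satisfies the Jacobi identity, i.e. is a Lie bracket on g. -/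
variable {K : Type*} [Field K] {g : Type*} [LieRing g] [LieAlgebra K g]

/-- The combination `λ₁[x,y] + λ₂[x,y]_N`. -/
def combBracket (N : g →ₗ[K] g) (l1 l2 : K) (x y : g) : g :=
  l1 • ⁅x, y⁆ + l2 • nBracket N x y

/-- If the coboundary of the Nijenhuis torsion vanishes, then `[,]_N` is
compatible with `[,]`: every linear combination satisfies the Jacobi identity. -/
theorem combBracket_jacobi_of_coboundary_torsion_eq_zero (N : g →ₗ[K] g)
    (hd : ∀ x y z : g,
      ⁅x, nTorsion N y z⁆ + ⁅y, nTorsion N z x⁆ + ⁅z, nTorsion N x y⁆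
        - nTorsion N ⁅x, y⁆ z - nTorsion N ⁅y, z⁆ x - nTorsion N ⁅z, x⁆ y = 0) :
    ∀ (l1 l2 : K) (x y z : g),
      combBracket N l1 l2 x (combBracket N l1 l2 y z)
        + combBracket N l1 l2 y (combBracket N l1 l2 z x)
        + combBracket N l1 l2 z (combBracket N l1 l2 x y) = 0 := by
  intro l1 l2 x y z
  have h := hd x y z
  have j : ∀ a b c : g, ⁅a, ⁅b, c⁆⁆ + ⁅b, ⁅c, a⁆⁆ + ⁅c, ⁅a, b⁆⁆ = 0 := lie_jacobi
  have sk : ∀ a b : g, ⁅a, b⁆ + ⁅b, a⁆ = (0 : g) := by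
    intro a b; rw [← lie_skew a b]; abel
  have lb : ∀ a b c : g, ⁅⁅a, b⁆, c⁆ - ⁅a, ⁅b, c⁆⁆ - ⁅b, ⁅c, a⁆⁆ = 0 := by
    intro a b c
    rw [lie_lie, ← lie_skew a c, lie_neg]
    abel
  have mp2 : ∀ u v : g, u + v = 0 → N u + N v = 0 := by
    intro u v huv; rw [← map_add, huv, map_zero]
  have mp3 : ∀ u v w : g, u + v + w = 0 → N u + N v + N w = 0 := by
    intro u v w huv; rw [← map_add, ← map_add, huv, map_zero]
  have mp3' : ∀ u v w : g, u - v - w = 0 → N u - N v - N w = 0 := by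
    intro u v w huv; rw [← map_sub, ← map_sub, huv, map_zero]
  have flip : ∀ a b : g, ⁅a, b⁆ = -⁅b, a⁆ := fun a b => (lie_skew a b).symm
  have jLN : ⁅⁅x, y⁆, z⁆ + ⁅⁅y, z⁆, x⁆ + ⁅⁅z, x⁆, y⁆ = 0 := by
    rw [flip ⁅x, y⁆ z, flip ⁅y, z⁆ x, flip ⁅z, x⁆ y, ← neg_add, ← neg_add, neg_eq_zero]
    exact j z x y
  have nj0 := mp3 _ _ _ (j x y z)
  have nn := mp3 _ _ _ (mp3 _ _ _ jLN)
  have nskA := mp2 _ _ (sk (N ⁅y, z⁆) x)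
  have nskB := mp2 _ _ (sk (N ⁅z, x⁆) y)
  have nskC := mp2 _ _ (sk (N ⁅x, y⁆) z)
  have nlbA := mp3' _ _ _ (lb y z (N x))
  have nlbB := mp3' _ _ _ (lb z x (N y))
  have nlbC := mp3' _ _ _ (lb x y (N z))
  simp only [nTorsion, nBracket, combBracket, lie_add, add_lie, lie_sub, sub_lie,
    lie_smul, smul_lie, map_add, map_sub, map_smul, smul_add, smul_sub] at h ⊢
  linear_combination (norm := module)
    (l1 * l1) • j x y z
    + (l1 * l2) • (j (N x) y z + j (N y) z x + j (N z) x y - nj0)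
    + (l2 * l2) • (- h + j x (N y) (N z) + j y (N z) (N x) + j z (N x) (N y)
        - sk (N x) (N ⁅y, z⁆) - sk (N y) (N ⁅z, x⁆) - sk (N z) (N ⁅x, y⁆)
        + nskA + nskB + nskC + nlbA + nlbB + nlbC - nn)
end

section
/- Let (h, N) be a partial Nijenhuis operator on a Lie algebra g over a field K, and let I : h → g be the natural inclusion. Then for every (λ₁, λ₂) ∈ K², the pair (h, N^λ) with N^λ := λ₁I + λ₂N is again a partial Nijenhuis operator on g, and moreover the subspace N^λ(h) = {λ₁x + λ₂Nx : x ∈ h} is a Lie subalgebra of g. -/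
variable {K : Type*} [Field K] {g : Type*} [LieRing g] [LieAlgebra K g]

/-- The bracket `[x,y]_N := [Nx,y] + [x,Ny] - N[x,y]` (an element of `g`)
associated to a linear map `N : h → g` defined on a Lie subalgebra `h ⊆ g`. -/
def pBracket (H : LieSubalgebra K g) (N : H →ₗ[K] g) (x y : H) : g :=
  ⁅N x, (y : g)⁆ + ⁅(x : g), N y⁆ - N ⁅x, y⁆

/-- `(h, N)` is a partial Nijenhuis operator on `g`: (i) `[x,y]_N ∈ h` for all
`x, y ∈ h` (witnessed by the lift `z`), and (ii) the torsion vanishes, i.e.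
`[Nx, Ny] = N([x,y]_N)`. -/
def IsPNO (H : LieSubalgebra K g) (N : H →ₗ[K] g) : Prop :=
  ∀ x y : H, ∃ z : H, (z : g) = pBracket H N x y ∧ ⁅N x, N y⁆ = N z

/-- The pencil member `N^λ := λ₁ I + λ₂ N`, where `I : h → g` is the inclusion. -/
def pencilOp (H : LieSubalgebra K g) (N : H →ₗ[K] g) (l1 l2 : K) : H →ₗ[K] g :=
  l1 • (LieSubalgebra.toSubmodule H).subtype + l2 • N

lemma pencil_apply (H : LieSubalgebra K g) (N : H →ₗ[K] g) (l1 l2 : K) (x : H) :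
    pencilOp H N l1 l2 x = l1 • (x : g) + l2 • N x := rfl

lemma coe_smul_add' (H : LieSubalgebra K g) (a b : K) (u v : H) :
    ((a • u + b • v : H) : g) = a • (u : g) + b • (v : g) := rfl

lemma coe_br' (H : LieSubalgebra K g) (x y : H) :
    ((⁅x, y⁆ : H) : g) = ⁅(x : g), (y : g)⁆ := rfl

/-- If `(h, N)` is a PNO on `g` then, for every `(λ₁, λ₂) ∈ K²`, the pair
`(h, N^λ)` with `N^λ = λ₁I + λ₂N` is again a PNO on `g`, and the image `N^λ(h)`
is a Lie subalgebra of `g`. -/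
theorem pencil_isPNO_and_image_isSubalgebra (H : LieSubalgebra K g) (N : H →ₗ[K] g)
    (h : IsPNO H N) (l1 l2 : K) :
    IsPNO H (pencilOp H N l1 l2) ∧
    ∀ x y : H, ∃ z : H,
      ⁅pencilOp H N l1 l2 x, pencilOp H N l1 l2 y⁆ = pencilOp H N l1 l2 z := by
  have key : IsPNO H (pencilOp H N l1 l2) := by
    intro x y
    obtain ⟨z, hz1, hz2⟩ := h x y
    simp only [pBracket] at hz1
    refine ⟨l1 • ⁅x, y⁆ + l2 • z, ?_, ?_⟩
    · rw [coe_smul_add', coe_br', hz1, pBracket, pencil_apply, pencil_apply, pencil_apply, coe_br']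
      simp only [smul_add, smul_sub, add_lie, lie_add, smul_lie, lie_smul]
      module
    · rw [pencil_apply, pencil_apply, pencil_apply, map_add, map_smul, map_smul,
        coe_smul_add', coe_br']
      simp only [smul_add, smul_sub, add_lie, lie_add, smul_lie, lie_smul, hz2, hz1]
      module
  exact ⟨key, fun x y => (key x y).imp fun z hz => hz.2⟩
end

section
/- Let (h, N) be a partial Nijenhuis operator on a Lie algebra g over a field K, and let I : h → g be the natural inclusion. Then for every (λ₁, λ₂) ∈ K², the bracket [,]_{N^λ} with N^λ := λ₁I + λ₂N is a Lie algebra structure on h (it takes values in h, is bilinear and antisymmetric, and satisfies the Jacobi identity), and N^λ : (h, [,]_{N^λ}) → (g, [,]) is a Lie algebra homomorphism, i.e. N^λ([x,y]_{N^λ}) = [N^λ x, N^λ y] for all x, y ∈ h. -/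
variable {K : Type*} [Field K] {g : Type*} [LieRing g] [LieAlgebra K g]

/-- If `(h, N)` is a PNO on `g`, then for every `(λ₁, λ₂) ∈ K²` the bracket
`[,]_{N^λ}` is a Lie algebra structure on `h` (it takes values in `h`, is bilinear
and antisymmetric, and satisfies the Jacobi identity), and
`N^λ : (h, [,]_{N^λ}) → (g, [,])` is a Lie algebra homomorphism. -/
theorem pencilBracket_lieAlgebra_and_hom (H : LieSubalgebra K g) (N : H →ₗ[K] g)
    (h : IsPNO H N) (l1 l2 : K) :
    ∃ B : H → H → H,
      (∀ x y : H, (B x y : g) = pBracket H (pencilOp H N l1 l2) x y) ∧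
      (∀ x y z : H, B (x + y) z = B x z + B y z) ∧
      (∀ (c : K) (x y : H), B (c • x) y = c • B x y) ∧
      (∀ x y : H, B x y = -B y x) ∧
      (∀ x y z : H, B x (B y z) + B y (B z x) + B z (B x y) = 0) ∧
      (∀ x y : H, pencilOp H N l1 l2 (B x y)
        = ⁅pencilOp H N l1 l2 x, pencilOp H N l1 l2 y⁆) := by
  classical
  choose PN cPN NPN using h
  simp only [pBracket] at cPN
  have csmul : ∀ (c : K) (v : H), ((c • v : H) : g) = c • (v : g) := fun _ _ => rfl
  have pen : ∀ v : H, pencilOp H N l1 l2 v = l1 • (v : g) + l2 • N v := fun _ => rfl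
  -- mixed Jacobi identity in H
  have keyH : ∀ x y z : H,
      (PN x ⁅y,z⁆ + ⁅x, PN y z⁆) + (PN y ⁅z,x⁆ + ⁅y, PN z x⁆)
        + (PN z ⁅x,y⁆ + ⁅z, PN x y⁆) = 0 := by
    intro x y z
    rw [← ZeroMemClass.coe_eq_zero]
    have h4 : N ⁅x,⁅y,z⁆⁆ + N ⁅y,⁅z,x⁆⁆ + N ⁅z,⁅x,y⁆⁆ = 0 := by
      rw [← map_add, ← map_add, lie_jacobi, map_zero]
    have h5 : (⁅N x, ⁅(y:g), (z:g)⁆⁆ + ⁅(y:g), ⁅(z:g), N x⁆⁆ + ⁅(z:g), ⁅N x, (y:g)⁆⁆)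
        + (⁅(x:g), ⁅N y, (z:g)⁆⁆ + ⁅N y, ⁅(z:g), (x:g)⁆⁆ + ⁅(z:g), ⁅(x:g), N y⁆⁆)
        + (⁅(x:g), ⁅(y:g), N z⁆⁆ + ⁅(y:g), ⁅N z, (x:g)⁆⁆ + ⁅N z, ⁅(x:g), (y:g)⁆⁆)
        - (N ⁅x,⁅y,z⁆⁆ + N ⁅y,⁅z,x⁆⁆ + N ⁅z,⁅x,y⁆⁆) = 0 := by
      rw [lie_jacobi (N x) ((y:g)) ((z:g)), lie_jacobi ((x:g)) (N y) ((z:g)),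
        lie_jacobi ((x:g)) ((y:g)) (N z), h4]
      abel
    push_cast [cPN, lie_add, add_lie, lie_sub, sub_lie]
    rw [← h5]
    abel
  -- Jacobi for PN
  have PNjac : ∀ x y z : H,
      PN x (PN y z) + PN y (PN z x) + PN z (PN x y) = 0 := by
    intro x y z
    rw [← ZeroMemClass.coe_eq_zero]
    have h4 : ⁅N x, N ⁅y,z⁆⁆ + N ⁅x, PN y z⁆ + (⁅N y, N ⁅z,x⁆⁆ + N ⁅y, PN z x⁆)
        + (⁅N z, N ⁅x,y⁆⁆ + N ⁅z, PN x y⁆) = 0 := by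
      rw [NPN, NPN, NPN, ← map_add, ← map_add, ← map_add, ← map_add, ← map_add,
        keyH, map_zero]
    have h5 : (⁅N x, ⁅N y, (z:g)⁆⁆ + ⁅N y, ⁅(z:g), N x⁆⁆ + ⁅(z:g), ⁅N x, N y⁆⁆)
        + (⁅N y, ⁅N z, (x:g)⁆⁆ + ⁅N z, ⁅(x:g), N y⁆⁆ + ⁅(x:g), ⁅N y, N z⁆⁆)
        + (⁅N z, ⁅N x, (y:g)⁆⁆ + ⁅N x, ⁅(y:g), N z⁆⁆ + ⁅(y:g), ⁅N z, N x⁆⁆)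
        - (⁅N x, N ⁅y,z⁆⁆ + N ⁅x, PN y z⁆ + (⁅N y, N ⁅z,x⁆⁆ + N ⁅y, PN z x⁆)
            + (⁅N z, N ⁅x,y⁆⁆ + N ⁅z, PN x y⁆)) = 0 := by
      rw [lie_jacobi (N x) (N y) ((z:g)), lie_jacobi (N y) (N z) ((x:g)),
        lie_jacobi (N z) (N x) ((y:g)), h4]
      abel
    push_cast [cPN, lie_add, add_lie, lie_sub, sub_lie, ← NPN]
    rw [← h5]
    abel
  -- PN bilinearity / antisymmetry
  have PNal : ∀ x y z : H, PN (x + y) z = PN x z + PN y z := by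
    intro x y z
    rw [← SetLike.coe_eq_coe]
    push_cast [cPN, add_lie, lie_add, map_add]
    abel
  have PNsl : ∀ (c : K) (x y : H), PN (c • x) y = c • PN x y := by
    intro c x y
    rw [← SetLike.coe_eq_coe]
    push_cast [cPN, smul_lie, lie_smul, map_smul, csmul]
    module
  have PNsr : ∀ (c : K) (x y : H), PN x (c • y) = c • PN x y := by
    intro c x y
    rw [← SetLike.coe_eq_coe]
    push_cast [cPN, smul_lie, lie_smul, map_smul, csmul]
    module
  have PNar : ∀ x y z : H, PN x (y + z) = PN x y + PN x z := by
    intro x y z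
    rw [← SetLike.coe_eq_coe]
    push_cast [cPN, add_lie, lie_add, map_add]
    abel
  have PNskew : ∀ x y : H, PN x y = - PN y x := by
    intro x y
    rw [← SetLike.coe_eq_coe]
    have e1 : (⁅y, x⁆ : H) = -⁅x, y⁆ := (lie_skew y x).symm
    push_cast [cPN, e1, map_neg]
    rw [(lie_skew (N y) ((x:g))).symm, (lie_skew ((y:g)) (N x)).symm]
    abel
  refine ⟨fun x y => l1 • ⁅x, y⁆ + l2 • PN x y, ?_, ?_, ?_, ?_, ?_, ?_⟩
  · intro x y
    beta_reduce
    push_cast [pBracket, pen, cPN, csmul]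
    simp only [add_lie, lie_add, smul_lie, lie_smul, smul_add, smul_sub, map_smul, map_add]
    module
  · intro x y z
    beta_reduce
    rw [add_lie, PNal]
    module
  · intro c x y
    beta_reduce
    rw [smul_lie, PNsl]
    module
  · intro x y
    beta_reduce
    rw [(lie_skew x y).symm, PNskew]
    module
  · intro x y z
    beta_reduce
    simp only [lie_add, lie_smul, PNar, PNsr, smul_add, smul_smul]
    have h5 : (l1 * l1) • ((⁅x, ⁅y, z⁆⁆ : H) + ⁅y, ⁅z, x⁆⁆ + ⁅z, ⁅x, y⁆⁆)
        + (l1 * l2) • ((PN x ⁅y,z⁆ + ⁅x, PN y z⁆) + (PN y ⁅z,x⁆ + ⁅y, PN z x⁆)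
            + (PN z ⁅x,y⁆ + ⁅z, PN x y⁆))
        + (l2 * l2) • (PN x (PN y z) + PN y (PN z x) + PN z (PN x y)) = 0 := by
      rw [lie_jacobi x y z, keyH x y z, PNjac x y z]
      simp
    rw [← h5]
    module
  · intro x y
    beta_reduce
    simp only [pen, map_add, map_smul]
    push_cast [cPN, csmul, ← NPN]
    simp only [smul_lie, lie_smul, lie_add, add_lie, lie_sub, sub_lie, smul_add, smul_sub]
    module
end

section
/- Let (h, N) be a partial Nijenhuis operator on a Lie algebra g over a field K. Then the Lie bracket [,]_N on h is compatible with the restriction of [,] to h: for all λ₁, λ₂ ∈ K, the bracket (x,y) ↦ λ₁[x,y] + λ₂[x,y]_N on h satisfies the Jacobi identity, i.e. is a Lie bracket on h. -/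
variable {K : Type*} [Field K] {g : Type*} [LieRing g] [LieAlgebra K g]

/-- The `H`-valued deformed bracket of a PNO, obtained by choice. -/
noncomputable def pnoNb (H : LieSubalgebra K g) (N : H →ₗ[K] g) (h : IsPNO H N) (x y : H) : H :=
  (h x y).choose

lemma pnoSmul_coe (H : LieSubalgebra K g) (l : K) (x : H) :
    ((l • x : H) : g) = l • (x : g) := rfl

lemma pnoNb_coe (H : LieSubalgebra K g) (N : H →ₗ[K] g) (h : IsPNO H N) (x y : H) :
    ((pnoNb H N h x y : H) : g) = pBracket H N x y := (h x y).choose_spec.1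

lemma pnoNb_N (H : LieSubalgebra K g) (N : H →ₗ[K] g) (h : IsPNO H N) (x y : H) :
    N (pnoNb H N h x y) = ⁅N x, N y⁆ := ((h x y).choose_spec.2).symm

lemma pnoKey (H : LieSubalgebra K g) (N : H →ₗ[K] g) (h : IsPNO H N) (x y z : H) :
    (⁅x, pnoNb H N h y z⁆ + ⁅y, pnoNb H N h z x⁆ + ⁅z, pnoNb H N h x y⁆)
      + (pnoNb H N h x ⁅y, z⁆ + pnoNb H N h y ⁅z, x⁆ + pnoNb H N h z ⁅x, y⁆) = 0 := by
  have hr : N ⁅x, ⁅y, z⁆⁆ + N ⁅y, ⁅z, x⁆⁆ + N ⁅z, ⁅x, y⁆⁆ = 0 := by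
    rw [← map_add, ← map_add, lie_jacobi, map_zero]
  apply Subtype.coe_injective
  push_cast [pnoSmul_coe, pnoNb_coe, pBracket, lie_add, add_lie, lie_sub, sub_lie]
  linear_combination (norm := module) lie_jacobi (N x) (y : g) (z : g)
    + lie_jacobi (N y) (z : g) (x : g) + lie_jacobi (N z) (x : g) (y : g) - hr

/-- If `(h, N)` is a PNO on `g`, then `[,]_N` is compatible with `[,]` on `h`:
for all `λ₁, λ₂ ∈ K`, the `h`-valued bracket `(x,y) ↦ λ₁[x,y] + λ₂[x,y]_N`
satisfies the Jacobi identity. -/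
theorem pnoBracket_compatible (H : LieSubalgebra K g) (N : H →ₗ[K] g)
    (h : IsPNO H N) (l1 l2 : K) :
    ∃ B : H → H → H,
      (∀ x y : H, (B x y : g) = l1 • ⁅(x : g), (y : g)⁆ + l2 • pBracket H N x y) ∧
      (∀ x y z : H, B x (B y z) + B y (B z x) + B z (B x y) = 0) := by
  refine ⟨fun x y => l1 • ⁅x, y⁆ + l2 • pnoNb H N h x y, ?_, ?_⟩
  · intro x y
    push_cast [pnoSmul_coe, pnoNb_coe]
    rfl
  · intro x y z
    have hr : N ⁅x, ⁅y, z⁆⁆ + N ⁅y, ⁅z, x⁆⁆ + N ⁅z, ⁅x, y⁆⁆ = 0 := by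
      rw [← map_add, ← map_add, lie_jacobi, map_zero]
    have hs : (N ⁅x, pnoNb H N h y z⁆ + N ⁅y, pnoNb H N h z x⁆ + N ⁅z, pnoNb H N h x y⁆)
        + (⁅N x, N ⁅y, z⁆⁆ + ⁅N y, N ⁅z, x⁆⁆ + ⁅N z, N ⁅x, y⁆⁆) = 0 := by
      have := congrArg N (pnoKey H N h x y z)
      simpa only [map_add, map_zero, pnoNb_N] using this
    apply Subtype.coe_injective
    push_cast [pnoSmul_coe, pnoNb_coe, pBracket, lie_add, add_lie, lie_smul, smul_lie, lie_sub, sub_lie,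
      smul_add, smul_sub, map_add, map_smul, pnoNb_N]
    linear_combination (norm := module)
      (l1 * l1) • lie_jacobi (x : g) (y : g) (z : g)
      + (l1 * l2) • (lie_jacobi (N x) (y : g) (z : g) + lie_jacobi (N y) (z : g) (x : g)
          + lie_jacobi (N z) (x : g) (y : g))
      + (l2 * l2) • (lie_jacobi (N x) (N y) (z : g) + lie_jacobi (N y) (N z) (x : g)
          + lie_jacobi (N z) (N x) (y : g))
      - (l1 * l2) • hr - (l2 * l2) • hs
end

section
/- Let g be a Lie algebra over a field K, h ⊆ g a Lie subalgebra, and N : h → g a linear operator such that N(h) is a Lie subalgebra of g (i.e. [Nx, Ny] ∈ N(h) for all x, y ∈ h). Suppose there exist finitely many pairs (a_k, b_k) ∈ K², k = 1, …, K, each not proportional to (1,0) nor to (0,1) (i.e. with a_k ≠ 0 and b_k ≠ 0), such that each subspace h_k := {a_k x + b_k Nx : x ∈ h} is a Lie subalgebra of g and ⋂_{k=1}^K h_k = {0}. Then (h, N) is a partial Nijenhuis operator on g: [x,y]_N ∈ h and T_N(x,y) = 0 for all x, y ∈ h. -/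
variable {K : Type*} [Field K] {g : Type*} [LieRing g] [LieAlgebra K g]

/-- Sufficient condition for a partial operator to be a PNO: if `N(h)` is a Lie
subalgebra, and there are finitely many pairs `(aₖ, bₖ)`, none proportional to
`(1,0)` or `(0,1)` (i.e. `aₖ ≠ 0` and `bₖ ≠ 0`), such that each
`hₖ = (aₖI + bₖN)(h)` is a Lie subalgebra and `⋂ₖ hₖ = {0}`, then `(h, N)` is a
partial Nijenhuis operator on `g`. -/
theorem isPNO_of_subalgebras_with_trivial_intersection
    (H : LieSubalgebra K g) (N : H →ₗ[K] g)
    (himg : ∀ x y : H, ∃ z : H, ⁅N x, N y⁆ = N z)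
    (m : ℕ) (a b : Fin m → K) (ha : ∀ k, a k ≠ 0) (hb : ∀ k, b k ≠ 0)
    (hsub : ∀ (k : Fin m) (x y : H), ∃ z : H,
      ⁅a k • (x : g) + b k • N x, a k • (y : g) + b k • N y⁆
        = a k • (z : g) + b k • N z)
    (hint : ∀ v : g, (∀ k : Fin m, ∃ x : H, v = a k • (x : g) + b k • N x) → v = 0) :
    IsPNO H N := by
  intro x y
  obtain ⟨w, hw⟩ := himg x y
  have key : pBracket H N x y - (w : g) = 0 := by
    apply hint
    intro k
    obtain ⟨z, hz⟩ := hsub k x y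
    have hab : a k * b k ≠ 0 := mul_ne_zero (ha k) (hb k)
    have h1 : (a k * a k) • ⁅(x : g), (y : g)⁆
        + (a k * b k) • (⁅N x, (y : g)⁆ + ⁅(x : g), N y⁆)
        + (b k * b k) • N w = a k • (z : g) + b k • N z := by
      rw [← hw, ← hz]
      simp only [lie_add, add_lie, smul_lie, lie_smul, smul_smul, smul_add]
      module
    refine ⟨(a k * b k)⁻¹ • (z - a k • ⁅x, y⁆ - b k • w), ?_⟩
    have hc : (a k * b k) • (pBracket H N x y - (w : g))
        = a k • ((z : g) - a k • ⁅(x : g), (y : g)⁆ - b k • (w : g))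
          + b k • (N z - a k • N ⁅x, y⁆ - b k • N w) := by
      unfold pBracket
      linear_combination (norm := module) h1
    have hcoe : ((((a k * b k)⁻¹ • (z - a k • ⁅x, y⁆ - b k • w)) : H) : g)
        = (a k * b k)⁻¹ • ((z : g) - a k • ⁅(x : g), (y : g)⁆ - b k • (w : g)) := by
      rfl
    have hN : N ((a k * b k)⁻¹ • (z - a k • ⁅x, y⁆ - b k • w))
        = (a k * b k)⁻¹ • (N z - a k • N ⁅x, y⁆ - b k • N w) := by
      simp [map_sub, map_smul]
    rw [hcoe, hN, smul_comm (a k) ((a k * b k)⁻¹), smul_comm (b k) ((a k * b k)⁻¹),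
      ← smul_add, ← hc, inv_smul_smul₀ hab]
  exact ⟨w, (sub_eq_zero.mp key).symm, by rw [hw]⟩
end

section
/- Let g be a Lie algebra over a field K, h ⊆ g a Lie subalgebra, and N : g → g a Nijenhuis operator (T_N ≡ 0 on all of g). Assume that for some λ ∈ K the following hold: (1) k := (N + λ·id_g)(h) is a Lie subalgebra of g, and (2) the preimage (N + λ·id_g)^{-1}(k) equals h. Then (h, N|_h) is a partial Nijenhuis operator on g: [x,y]_N ∈ h for all x, y ∈ h and T_{N|_h}(x,y) = 0 for all x, y ∈ h. -/
variable {K : Type*} [Field K] {g : Type*} [LieRing g] [LieAlgebra K g]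

/-- Restriction of a Nijenhuis operator to a subalgebra: if `N : g → g` is
Nijenhuis, `h ⊆ g` is a Lie subalgebra and for some `λ ∈ K` (1) the image
`k := (N + λ·id)(h)` is a Lie subalgebra and (2) `(N + λ·id)⁻¹(k) = h`, then
`(h, N|_h)` is a partial Nijenhuis operator on `g`: for all `x, y ∈ h` there is a
lift `z ∈ h` of `[x,y]_N` with `[Nx, Ny] = N(z)`. -/
theorem restrict_isPNO_of_nijenhuis (N : g →ₗ[K] g)
    (hN : ∀ x y : g, ⁅N x, N y⁆ - N (nBracket N x y) = 0)
    (H : LieSubalgebra K g) (l : K)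
    (h1 : ∀ x y : H, ∃ z : H,
      ⁅N (x : g) + l • (x : g), N (y : g) + l • (y : g)⁆ = N (z : g) + l • (z : g))
    (h2 : ∀ v : g, (∃ x : H, N v + l • v = N (x : g) + l • (x : g)) ↔ v ∈ H) :
    ∀ x y : H, ∃ z : H,
      (z : g) = ⁅N (x : g), (y : g)⁆ + ⁅(x : g), N (y : g)⁆ - N ⁅(x : g), (y : g)⁆ ∧
      ⁅N (x : g), N (y : g)⁆ = N (z : g) := by
  intro x y
  have hxy : (⁅(x : g), (y : g)⁆) ∈ H := H.lie_mem x.2 y.2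
  set w : g := ⁅N (x : g), (y : g)⁆ + ⁅(x : g), N (y : g)⁆ - N ⁅(x : g), (y : g)⁆ with hw
  have hNw : ⁅N (x : g), N (y : g)⁆ = N w := by
    have := hN (x : g) (y : g)
    rw [sub_eq_zero] at this
    simpa [nBracket, hw] using this
  obtain ⟨z, hz⟩ := h1 x y
  have hmem : w ∈ H := by
    rw [← h2]
    refine ⟨z - l • ⟨⁅(x : g), (y : g)⁆, hxy⟩, ?_⟩
    have hz' : ⁅N (x : g), N (y : g)⁆ + l • ⁅(x : g), N (y : g)⁆ +
        l • ⁅N (x : g), (y : g)⁆ + (l * l) • ⁅(x : g), (y : g)⁆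
        = N (z : g) + l • (z : g) := by
      rw [← hz]
      simp [lie_add, add_lie, lie_smul, smul_lie, smul_smul]
      abel
    have hco : (((z - l • ⟨⁅(x : g), (y : g)⁆, hxy⟩ : H)) : g)
        = (z : g) - l • ⁅(x : g), (y : g)⁆ := rfl
    rw [hco]
    calc N w + l • w
        = (⁅N (x : g), N (y : g)⁆ + l • ⁅(x : g), N (y : g)⁆ + l • ⁅N (x : g), (y : g)⁆
            + (l * l) • ⁅(x : g), (y : g)⁆)
          - (l • N ⁅(x : g), (y : g)⁆ + (l * l) • ⁅(x : g), (y : g)⁆) := by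
          rw [← hNw, hw]; module
      _ = (N (z : g) + l • (z : g))
          - (l • N ⁅(x : g), (y : g)⁆ + (l * l) • ⁅(x : g), (y : g)⁆) := by rw [hz']
      _ = N ((z : g) - l • ⁅(x : g), (y : g)⁆) + l • ((z : g) - l • ⁅(x : g), (y : g)⁆) := by
          rw [map_sub, map_smul]; module
  exact ⟨⟨w, hmem⟩, rfl, hNw⟩
end

section
/- Let λ₁, λ₂, λ₃ be pairwise distinct nonzero real numbers, U ⊆ ℝ³ open, f : ℝ³ → ℝ of class C² on U, and define g : U → ℝ³ by g := (λ₁^{-1}∂₁f, λ₂^{-1}∂₂f, λ₃^{-1}∂₃f), where ∂ᵢ denotes the partial derivative in the i-th coordinate. Then at every point p ∈ U: λ₁λ₂λ₃ · ⟨g(p), (curl g)(p)⟩ = (λ₂−λ₃)·∂₁f·∂₂∂₃f + (λ₃−λ₁)·∂₂f·∂₃∂₁f + (λ₁−λ₂)·∂₃f·∂₁∂₂f, where curl g := (∂₂g₃ − ∂₃g₂, ∂₃g₁ − ∂₁g₃, ∂₁g₂ − ∂₂g₁). Consequently, the integrability condition dω∧ω = 0 at p for the 1-form ω = λ₁^{-1}∂₁f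 dx₁ + λ₂^{-1}∂₂f dx₂ + λ₃^{-1}∂₃f dx₃ — equivalently, ⟨g(p), (curl g)(p)⟩ = 0 — holds if and only if f satisfies the dispersionless Hirota equation (λ₂−λ₃)∂₁f·∂₂∂₃f + (λ₃−λ₁)∂₂f·∂₃∂₁f + (λ₁−λ₂)∂₃f·∂₁∂₂f = 0 at p. -/
/-- Partial derivative `∂ᵢf` of `f : ℝ³ → ℝ` at `p`. -/
noncomputable def pd (i : Fin 3) (f : (Fin 3 → ℝ) → ℝ) (p : Fin 3 → ℝ) : ℝ :=
  fderiv ℝ f p (Pi.single i 1)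

/-- Second partial derivative `∂ᵢ∂ⱼf`. -/
noncomputable def pd2 (i j : Fin 3) (f : (Fin 3 → ℝ) → ℝ) (p : Fin 3 → ℝ) : ℝ :=
  pd i (pd j f) p

/-- `curl` of a vector field on `ℝ³` given by its three component functions. -/
noncomputable def curl (v : Fin 3 → (Fin 3 → ℝ) → ℝ) (p : Fin 3 → ℝ) :
    Fin 3 → ℝ :=
  ![pd 1 (v 2) p - pd 2 (v 1) p,
    pd 2 (v 0) p - pd 0 (v 2) p,
    pd 0 (v 1) p - pd 1 (v 0) p]

/-- The coefficient vector field `g = (λ₁⁻¹∂₁f, λ₂⁻¹∂₂f, λ₃⁻¹∂₃f)` of the 1-form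
`ω = (N^t)⁻¹ df`. -/
noncomputable def gvec (l1 l2 l3 : ℝ) (f : (Fin 3 → ℝ) → ℝ) :
    Fin 3 → (Fin 3 → ℝ) → ℝ :=
  ![fun p => l1⁻¹ * pd 0 f p, fun p => l2⁻¹ * pd 1 f p, fun p => l3⁻¹ * pd 2 f p]


lemma fderiv_diff {f : (Fin 3 → ℝ) → ℝ} {p : Fin 3 → ℝ}
    (hf : ContDiffAt ℝ 2 f p) : DifferentiableAt ℝ (fderiv ℝ f) p := by
  have : ContDiffAt ℝ 1 (fderiv ℝ f) p := hf.fderiv_right (by norm_num)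
  exact this.differentiableAt one_ne_zero

lemma pd_diff {f : (Fin 3 → ℝ) → ℝ} {p : Fin 3 → ℝ}
    (hf : ContDiffAt ℝ 2 f p) (j : Fin 3) : DifferentiableAt ℝ (pd j f) p :=
  (fderiv_diff hf).clm_apply (differentiableAt_const _)

lemma pd2_eq {f : (Fin 3 → ℝ) → ℝ} {p : Fin 3 → ℝ}
    (hf : ContDiffAt ℝ 2 f p) (i j : Fin 3) :
    pd2 i j f p = fderiv ℝ (fderiv ℝ f) p (Pi.single i 1) (Pi.single j 1) := by
  have h := fderiv_clm_apply (fderiv_diff hf)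
      (differentiableAt_const (Pi.single j 1 : Fin 3 → ℝ))
  have hpd : pd j f = fun q => fderiv ℝ f q (Pi.single j 1) := rfl
  rw [pd2, pd, hpd, h]
  simp

lemma pd2_symm {f : (Fin 3 → ℝ) → ℝ} {p : Fin 3 → ℝ}
    (hf : ContDiffAt ℝ 2 f p) (i j : Fin 3) : pd2 i j f p = pd2 j i f p := by
  rw [pd2_eq hf, pd2_eq hf]
  exact (hf.isSymmSndFDerivAt (by simp)) _ _

lemma pd_const_mul {f : (Fin 3 → ℝ) → ℝ} {p : Fin 3 → ℝ}
    (hf : ContDiffAt ℝ 2 f p) (c : ℝ) (i j : Fin 3) :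
    pd i (fun q => c * pd j f q) p = c * pd2 i j f p := by
  rw [pd, fderiv_const_mul (pd_diff hf j) c]
  simp [pd2, pd]

/-- For pairwise distinct nonzero `λ₁, λ₂, λ₃` and `f` of class `C²` on an open set
`U ⊆ ℝ³`: `λ₁λ₂λ₃·⟨g, curl g⟩` equals the Hirota expression
`(λ₂−λ₃)∂₁f·∂₂∂₃f + (λ₃−λ₁)∂₂f·∂₃∂₁f + (λ₁−λ₂)∂₃f·∂₁∂₂f` at every `p ∈ U`;
consequently the integrability condition `⟨g, curl g⟩ = 0` (i.e. `dω∧ω = 0`) holds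
at `p` iff `f` satisfies the dispersionless Hirota equation at `p`. -/
theorem hirota_iff_integrability (l1 l2 l3 : ℝ)
    (h12 : l1 ≠ l2) (h13 : l1 ≠ l3) (h23 : l2 ≠ l3)
    (h1 : l1 ≠ 0) (h2 : l2 ≠ 0) (h3 : l3 ≠ 0)
    (U : Set (Fin 3 → ℝ)) (hU : IsOpen U)
    (f : (Fin 3 → ℝ) → ℝ) (hf : ContDiffOn ℝ 2 f U) :
    ∀ p ∈ U,
      (l1 * l2 * l3 *
          (∑ i : Fin 3, gvec l1 l2 l3 f i p * curl (gvec l1 l2 l3 f) p i)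
        = (l2 - l3) * pd 0 f p * pd2 1 2 f p
          + (l3 - l1) * pd 1 f p * pd2 2 0 f p
          + (l1 - l2) * pd 2 f p * pd2 0 1 f p) ∧
      ((∑ i : Fin 3, gvec l1 l2 l3 f i p * curl (gvec l1 l2 l3 f) p i) = 0 ↔
        (l2 - l3) * pd 0 f p * pd2 1 2 f p
          + (l3 - l1) * pd 1 f p * pd2 2 0 f p
          + (l1 - l2) * pd 2 f p * pd2 0 1 f p = 0) := by
  intro p hp
  have hc : ContDiffAt ℝ 2 f p := hf.contDiffAt (hU.mem_nhds hp)
  have key : l1 * l2 * l3 *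
          (∑ i : Fin 3, gvec l1 l2 l3 f i p * curl (gvec l1 l2 l3 f) p i)
        = (l2 - l3) * pd 0 f p * pd2 1 2 f p
          + (l3 - l1) * pd 1 f p * pd2 2 0 f p
          + (l1 - l2) * pd 2 f p * pd2 0 1 f p := by
    simp only [gvec, curl, Fin.sum_univ_three, Matrix.cons_val_zero,
      Matrix.cons_val_one, Matrix.head_cons, Matrix.cons_val_two, Matrix.tail_cons]
    rw [pd_const_mul hc, pd_const_mul hc, pd_const_mul hc, pd_const_mul hc,
      pd_const_mul hc, pd_const_mul hc]
    rw [pd2_symm hc 2 1, pd2_symm hc 0 2, pd2_symm hc 1 0]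
    field_simp
  refine ⟨key, ?_⟩
  rw [← key]
  constructor
  · intro h; rw [h, mul_zero]
  · intro h
    rcases mul_eq_zero.mp h with h' | h'
    · exact absurd h' (mul_ne_zero (mul_ne_zero h1 h2) h3)
    · exact h'
end
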